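/- For every real number α there exists a nonzero real scalar c such that c • (C_∞ · exp(α•B)) belongs to the set 𝒞 of applicable projections; that is, every member of the one-parameter camera family C_α := C_∞ · exp(α•B) is (up to the scalar equivalence of projection matrices) an applicable projection. -/

import Mathlib

open Matrix

/-- The null-polarity matrix used in Cremona's method. -/
def Bmat : Matrix (Fin 4) (Fin 4) ℝ :=
  !![0, -1, 0, 0;
     1,  0, 0, 0;
     0,  0, 0, -1;
     0,  0, 1, 0]

/-- Parallel projection along the z-axis, in homogeneous coordinates. -/
def Cinf : Matrix (Fin 3) (Fin 4) ℝ :=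
  !![1, 0, 0, 0;
     0, 1, 0, 0;
     0, 0, 0, 1]

/-- The basic finite pinhole camera with focal distance `φ`. -/
noncomputable def Cfin (φ : ℝ) : Matrix (Fin 3) (Fin 4) ℝ :=
  !![1, 0, 0, 0;
     0, 1, 0, 0;
     0, 0, φ⁻¹, 0]

/-- The rigid-motion matrix with rotation block `R` and translation column `t`. -/
def Mblock (R : Matrix (Fin 3) (Fin 3) ℝ) (t : Fin 3 → ℝ) : Matrix (Fin 4) (Fin 4) ℝ :=
  Matrix.reindex finSumFinEquiv finSumFinEquiv
    (Matrix.fromBlocks R (Matrix.replicateCol (Fin 1) t)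
      (0 : Matrix (Fin 1) (Fin 3) ℝ) (1 : Matrix (Fin 1) (Fin 1) ℝ))

/-- The set `𝒞` of applicable projections: finite pinhole cameras and parallel
projections. -/
def applicableProjections : Set (Matrix (Fin 3) (Fin 4) ℝ) :=
  {C | (∃ φ : ℝ, φ ≠ 0 ∧ ∃ R ∈ Matrix.specialOrthogonalGroup (Fin 3) ℝ, ∃ t : Fin 3 → ℝ,
          C = Cfin φ * Mblock R t) ∨
       (∃ ψ : ℝ, ψ ≠ 0 ∧ ∃ R ∈ Matrix.specialOrthogonalGroup (Fin 3) ℝ, ∃ t : Fin 3 → ℝ,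
          C = !![1, 0, 0; 0, ψ, 0; 0, 0, 1] * Cinf * Mblock R t)}

/-! Since `B * B = -1`, the map `ℂ → M₄(ℝ)`, `a + b i ↦ a + b B` is an algebra homomorphism, so
`exp (α • B) = cos α + sin α • B` and `C∞ * exp (α • B)` has rows `(cos α, -sin α, 0, 0)`,
`(sin α, cos α, 0, 0)`, `(0, 0, sin α, cos α)`. If `sin α ≠ 0` this is the pinhole camera of
focal distance `1 / sin α` placed by the rotation about the `z`-axis through `α` and the
translation `(0, 0, cot α)`; if `sin α = 0` then `cos α = ±1` and it is `± C∞`. -/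

open Real

theorem NormedSpace.exp_smul_of_mul_self_eq_neg_one {A : Type*} [NormedRing A]
    [NormedAlgebra ℝ A] (J : A) (hJ : J * J = -1) (α : ℝ) :
    NormedSpace.exp (α • J) = cos α • 1 + sin α • J := by
  let _ : Algebra ℚ A := Algebra.compHom A (algebraMap ℚ ℝ)
  let f := Complex.liftAux J hJ
  have hf : Continuous f := LinearMap.continuous_of_finiteDimensional f.toLinearMap
  have hαJ : α • J = f (α * Complex.I) := by simp [f, Complex.liftAux_apply]
  rw [hαJ, ← NormedSpace.map_exp f hf, ← Complex.exp_eq_exp_ℂ, Complex.exp_mul_I]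
  simp [f, Complex.liftAux_apply, Algebra.algebraMap_eq_smul_one,
    Complex.cos_ofReal_re, Complex.sin_ofReal_re]

theorem Bmat_mul_self : Bmat * Bmat = -1 := by
  ext i j
  fin_cases i <;> fin_cases j <;> simp [Bmat, Matrix.mul_apply, Fin.sum_univ_four]

theorem exp_smul_Bmat (α : ℝ) :
    NormedSpace.exp (α • Bmat) = cos α • 1 + sin α • Bmat := by
  -- `exp` only sees the topology, so any norm inducing it may be used.
  let _ := Matrix.linftyOpNormedRing (n := Fin 4) (α := ℝ)
  let _ := Matrix.linftyOpNormedAlgebra (n := Fin 4) (R := ℝ) (α := ℝ)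
  exact NormedSpace.exp_smul_of_mul_self_eq_neg_one Bmat Bmat_mul_self α

theorem Cinf_mul_exp_smul_Bmat (α : ℝ) :
    Cinf * NormedSpace.exp (α • Bmat) =
      !![cos α, -sin α, 0, 0;
         sin α,  cos α, 0, 0;
         0, 0, sin α, cos α] := by
  rw [exp_smul_Bmat]
  ext i j
  fin_cases i <;> fin_cases j <;>
    simp [Cinf, Bmat, Matrix.mul_apply, Fin.sum_univ_four, Matrix.one_apply]

theorem Mblock_eq (R : Matrix (Fin 3) (Fin 3) ℝ) (t : Fin 3 → ℝ) :
    Mblock R t = !![R 0 0, R 0 1, R 0 2, t 0;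
                    R 1 0, R 1 1, R 1 2, t 1;
                    R 2 0, R 2 1, R 2 2, t 2;
                    0, 0, 0, 1] := by
  ext i j
  fin_cases i <;> fin_cases j <;> rfl

theorem Mblock_one_zero : Mblock 1 0 = 1 := by
  rw [Mblock_eq]
  ext i j
  fin_cases i <;> fin_cases j <;> rfl

noncomputable def rotZ (α : ℝ) : Matrix (Fin 3) (Fin 3) ℝ :=
  !![cos α, -sin α, 0;
     sin α,  cos α, 0;
     0, 0, 1]

theorem rotZ_mem_specialOrthogonalGroup (α : ℝ) :
    rotZ α ∈ Matrix.specialOrthogonalGroup (Fin 3) ℝ := by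
  refine Matrix.mem_specialOrthogonalGroup_iff.2 ⟨(Matrix.mem_orthogonalGroup_iff _ _).2 ?_, ?_⟩
  · ext i j
    fin_cases i <;> fin_cases j <;>
      simp [rotZ, Matrix.mul_apply, Fin.sum_univ_three, ← sq, mul_comm]
  · simp [rotZ, Matrix.det_fin_three, ← sq]

theorem Cinf_mul_exp_smul_Bmat_eq_Cfin_mul {α : ℝ} (hα : sin α ≠ 0) :
    Cinf * NormedSpace.exp (α • Bmat) =
      Cfin (sin α)⁻¹ * Mblock (rotZ α) ![0, 0, cos α / sin α] := by
  rw [Cinf_mul_exp_smul_Bmat, Mblock_eq]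
  ext i j
  fin_cases i <;> fin_cases j <;>
    simp [Cfin, rotZ, Matrix.mul_apply, Fin.sum_univ_four, mul_div_cancel₀ _ hα]

theorem cos_smul_Cinf_mul_exp_smul_Bmat {α : ℝ} (hα : sin α = 0) :
    cos α • (Cinf * NormedSpace.exp (α • Bmat)) = Cinf := by
  have hcos : cos α * cos α = 1 := by nlinarith [sin_sq_add_cos_sq α]
  rw [Cinf_mul_exp_smul_Bmat]
  ext i j
  fin_cases i <;> fin_cases j <;> simp [Cinf, hα, hcos]

theorem Cinf_mem_applicableProjections : Cinf ∈ applicableProjections := by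
  refine Or.inr ⟨1, one_ne_zero, 1, one_mem _, 0, ?_⟩
  rw [Mblock_one_zero, Matrix.mul_one]
  ext i j
  fin_cases i <;> fin_cases j <;> simp [Matrix.mul_apply, Fin.sum_univ_three]

/-- For every real `α` there is a nonzero scalar `c` such that
`c • (C∞ * exp (α • B))` is an applicable projection: every member of the camera
family `C_α := C∞ * exp (α • B)` is, up to scalar equivalence, in `𝒞`. -/
theorem camera_family_applicable (α : ℝ) :
    ∃ c : ℝ, c ≠ 0 ∧
      c • (Cinf * NormedSpace.exp (α • Bmat)) ∈ applicableProjections := by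
  by_cases hα : sin α = 0
  · have hcos : cos α ≠ 0 := fun h => by simpa [hα, h] using sin_sq_add_cos_sq α
    refine ⟨cos α, hcos, ?_⟩
    rw [cos_smul_Cinf_mul_exp_smul_Bmat hα]
    exact Cinf_mem_applicableProjections
  · refine ⟨1, one_ne_zero, Or.inl ⟨(sin α)⁻¹, inv_ne_zero hα, rotZ α,
      rotZ_mem_specialOrthogonalGroup α, ![0, 0, cos α / sin α], ?_⟩⟩
    rw [one_smul, Cinf_mul_exp_smul_Bmat_eq_Cfin_mul hα]
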